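/- Let d ≥ 2, α > 0, C₁ > 0 and C₂ < 0, and let h(r) = C₁ r^{-α} + C₂ r^{-α-1} on (0,∞). Then for all sufficiently small μ > 0: the equation h(r) = -μ has a unique solution r⁻(μ), the equation h(r) = μ has exactly two solutions r₁⁺(μ) < r₂⁺(μ), the set {r : h(r) ≤ -μ} equals (0, r⁻(μ)], the set {r : h(r) ≥ μ} equals [r₁⁺(μ), r₂⁺(μ)], and as μ → 0⁺: r⁻(μ) = -C₂/C₁ - (1/C₁)(-C₂/C₁)^{α+1} μ + o(μ), r₁⁺(μ) = -C₂/C₁ + (1/C₁)(-C₂/C₁)^{α+1} μ + o(μ), and r₂⁺(μ) = C₁^{1/α} μ^{-1/α} + C₂/(α C₁) + o(1). -/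

import Mathlib

/-!
Write `h r = r ^ (-α - 1) * (C₁ * r + C₂)`. Then `h` vanishes only at `r₀ = -C₂ / C₁`, its
derivative `r ^ (-α - 2) * (-(α * C₁) * r - (α + 1) * C₂)` changes sign once, at
`r⋆ = (α + 1) * r₀ / α > r₀`, and `h → 0` at infinity. So for small `μ > 0` the level `-μ` is
attained once, below `r₀`, and the level `μ` once on each side of `r⋆`; the sub- and superlevel
sets follow from monotonicity on the two branches.

Since `h' r₀ = C₁ * r₀ ^ (-α - 1) ≠ 0`, the inverse function theorem gives a local inverse `g`
of `h` near `r₀` with `g' 0 = r₀ ^ (α + 1) / C₁`; the expansions of `r⁻(μ) = g (-μ)` and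
`r₁⁺(μ) = g μ` are its first-order Taylor expansions. On the decreasing branch,
`μ = C₁ r ^ (-α) (1 + C₂ / (C₁ r))` gives
`C₁ ^ (1 / α) μ ^ (-1 / α) = r (1 + C₂ / (C₁ r)) ^ (-1 / α) = r - C₂ / (α C₁) + o(1)`
as `r → ∞`, and `r₂⁺(μ) → ∞` as `μ → 0⁺`.
-/

open Filter Set Asymptotics
open scoped Topology

theorem HasDerivAt.isLittleO_nhdsGT_zero {f : ℝ → ℝ} {f' : ℝ} (hf : HasDerivAt f f' 0) :
    (fun μ => f μ - (f 0 + f' * μ)) =o[𝓝[>] 0] fun μ => μ := by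
  have := (hasDerivAt_iff_isLittleO_nhds_zero.1 hf).mono (nhdsWithin_le_nhds (s := Ioi 0))
  simpa only [zero_add, smul_eq_mul, sub_add_eq_sub_sub, mul_comm f'] using this

theorem tendsto_mul_one_add_div_rpow_sub_one (p t : ℝ) :
    Tendsto (fun z : ℝ => z * ((1 + t / z) ^ p - 1)) atTop (𝓝 (p * t)) := by
  have hderiv : HasDerivAt (fun u : ℝ => (1 + t * u) ^ p) (p * t) 0 := by
    have := (((hasDerivAt_id (0 : ℝ)).const_mul t).const_add 1).rpow_const (p := p)
      (Or.inl (by simp))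
    simpa [mul_comm] using this
  have hinv : Tendsto (fun z : ℝ => z⁻¹) atTop (𝓝[≠] 0) :=
    tendsto_inv_atTop_nhdsGT_zero.mono_right (nhdsWithin_mono _ fun _ hx => ne_of_gt hx)
  refine ((hasDerivAt_iff_tendsto_slope.1 hderiv).comp hinv).congr fun z => ?_
  simp [slope_def_field, div_eq_mul_inv, mul_comm]

theorem exists_gt_apply_eq_of_tendsto_zero {f : ℝ → ℝ} {c μ : ℝ} (hf : ContinuousOn f (Ici c))
    (hlim : Tendsto f atTop (𝓝 0)) (hμ : 0 < μ) (hμc : μ < f c) : ∃ z, c < z ∧ f z = μ := by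
  obtain ⟨b, hfb, hcb⟩ := ((hlim.eventually_lt_const hμ).and (eventually_gt_atTop c)).exists
  obtain ⟨z, hz, hfz⟩ := intermediate_value_Ioo' hcb.le (hf.mono Icc_subset_Ici_self) ⟨hfb, hμc⟩
  exact ⟨z, hz.1, hfz⟩

theorem tendsto_atTop_of_antitoneOn_of_apply_eq {f z : ℝ → ℝ} {c : ℝ}
    (hf : AntitoneOn f (Ici c)) (hpos : ∀ r, c ≤ r → 0 < f r)
    (hz : ∀ᶠ μ in 𝓝[>] 0, c ≤ z μ ∧ f (z μ) = μ) : Tendsto z (𝓝[>] 0) atTop := by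
  refine tendsto_atTop.2 fun B => ?_
  have hB : c ≤ max B c := le_max_right B c
  have hsmall : ∀ᶠ μ in 𝓝[>] (0 : ℝ), μ < f (max B c) :=
    (tendsto_nhdsWithin_of_tendsto_nhds tendsto_id).eventually_lt_const (hpos _ hB)
  filter_upwards [hz, hsmall] with μ ⟨hcz, hfz⟩ hμ
  by_contra! hzB
  have := hf hcz hB (hzB.trans_le (le_max_left B c)).le
  linarith

section Unimodal

variable {f : ℝ → ℝ} {a c : ℝ}

theorem StrictMonoOn.sep_le_eq_Ioc (hf : StrictMonoOn f (Ioc a c)) {x : ℝ} (hx : x ∈ Ioc a c)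
    (hgt : ∀ r, c < r → f x < f r) : {r ∈ Ioi a | f r ≤ f x} = Ioc a x := by
  ext r
  refine ⟨fun ⟨hr, hrx⟩ => ⟨hr, ?_⟩, fun ⟨hr, hrx⟩ => ⟨hr, ?_⟩⟩
  · by_contra! hxr
    rcases le_or_gt r c with hrc | hcr
    · exact (hf hx ⟨hr, hrc⟩ hxr).not_ge hrx
    · exact (hgt r hcr).not_ge hrx
  · exact hf.monotoneOn ⟨hr, hrx.trans hx.2⟩ hx hrx

theorem StrictMonoOn.eq_of_apply_eq (hf : StrictMonoOn f (Ioc a c)) {x : ℝ} (hx : x ∈ Ioc a c)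
    (hgt : ∀ r, c < r → f x < f r) {r : ℝ} (hr : a < r) (hfr : f r = f x) : r = x := by
  have hrx : r ∈ Ioc a x := hf.sep_le_eq_Ioc hx hgt ▸ ⟨hr, hfr.le⟩
  exact hf.injOn ⟨hr, hrx.2.trans hx.2⟩ hx hfr

variable (hmono : StrictMonoOn f (Ioc a c)) (hanti : StrictAntiOn f (Ici c))
include hmono hanti

theorem sep_le_eq_Icc_of_unimodal {y z : ℝ} (hy : y ∈ Ioc a c) (hz : c ≤ z) (hyz : f y = f z) :
    {r ∈ Ioi a | f y ≤ f r} = Icc y z := by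
  ext r
  refine ⟨fun ⟨hr, hyr⟩ => ⟨?_, ?_⟩, fun ⟨hyr, hrz⟩ => ⟨hy.1.trans_le hyr, ?_⟩⟩
  · by_contra! hry
    exact (hmono ⟨hr, hry.le.trans hy.2⟩ hy hry).not_ge hyr
  · by_contra! hzr
    exact (hanti hz (hz.trans hzr.le) hzr).not_ge (hyz ▸ hyr)
  · rcases le_or_gt r c with hrc | hcr
    · exact hmono.monotoneOn hy ⟨hy.1.trans_le hyr, hrc⟩ hyr
    · exact hyz ▸ hanti.antitoneOn hcr.le hz hrz

theorem eq_or_eq_of_unimodal {y z : ℝ} (hy : y ∈ Ioc a c) (hz : c ≤ z) (hyz : f y = f z)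
    {r : ℝ} (hr : a < r) (hfr : f r = f y) : r = y ∨ r = z := by
  rcases le_or_gt r c with hrc | hcr
  · exact .inl (hmono.injOn ⟨hr, hrc⟩ hy hfr)
  · exact .inr (hanti.injOn hcr.le hz (hfr.trans hyz))

theorem level_sets_of_unimodal {r₀ μ x y z : ℝ} (hr₀c : r₀ ≤ c) (hpos : ∀ r, r₀ < r → 0 < f r)
    (hμ : 0 < μ) (hx : a < x) (hfx : f x = -μ) (hy : y ∈ Ioo a c) (hfy : f y = μ) (hz : c < z)
    (hfz : f z = μ) :
    (a < x ∧ f x = -μ ∧ ∀ r, a < r → f r = -μ → r = x) ∧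
      (a < y ∧ y < z ∧ f y = μ ∧ f z = μ ∧ ∀ r, a < r → f r = μ → r = y ∨ r = z) ∧
      {r ∈ Ioi a | f r ≤ -μ} = Ioc a x ∧ {r ∈ Ioi a | μ ≤ f r} = Icc y z := by
  have hgt : ∀ r, r₀ < r → f x < f r := fun r hr => hfx ▸ (neg_neg_of_pos hμ).trans (hpos r hr)
  have hx' : x ∈ Ioc a r₀ := ⟨hx, not_lt.1 fun hlt => (hgt x hlt).false⟩
  have hmono₀ : StrictMonoOn f (Ioc a r₀) := hmono.mono (Ioc_subset_Ioc_right hr₀c)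
  have hy' : y ∈ Ioc a c := Ioo_subset_Ioc_self hy
  have hyz : f y = f z := hfy.trans hfz.symm
  refine ⟨⟨hx, hfx, fun r hr hfr => hmono₀.eq_of_apply_eq hx' hgt hr (hfr.trans hfx.symm)⟩,
    ⟨hy.1, hy.2.trans hz, hfy, hfz, fun r hr hfr =>
      eq_or_eq_of_unimodal hmono hanti hy' hz.le hyz hr (hfr.trans hfy.symm)⟩, ?_, ?_⟩
  · simpa only [hfx] using hmono₀.sep_le_eq_Ioc hx' hgt
  · simpa only [hfy] using sep_le_eq_Icc_of_unimodal hmono hanti hy' hz.le hyz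

end Unimodal

noncomputable def powerProfile (α C₁ C₂ r : ℝ) : ℝ := C₁ * r ^ (-α) + C₂ * r ^ (-α - 1)

section PowerProfile

variable {α C₁ C₂ r : ℝ}

theorem powerProfile_eq_mul (hr : 0 < r) :
    powerProfile α C₁ C₂ r = r ^ (-α - 1) * (C₁ * r + C₂) := by
  rw [powerProfile, Real.rpow_sub_one hr.ne']
  field_simp

theorem hasStrictDerivAt_powerProfile (hr : 0 < r) :
    HasStrictDerivAt (powerProfile α C₁ C₂)
      (r ^ (-α - 2) * (-(α * C₁) * r - (α + 1) * C₂)) r := by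
  have hpow := fun p => Real.hasStrictDerivAt_rpow_const_of_ne hr.ne' p
  refine (((hpow (-α)).const_mul C₁).add ((hpow (-α - 1)).const_mul C₂)).congr_deriv ?_
  rw [show -α - 1 - 1 = -α - 2 by ring, show -α - 1 = -α - 2 + 1 by ring,
    Real.rpow_add_one hr.ne']
  ring

theorem continuousOn_powerProfile : ContinuousOn (powerProfile α C₁ C₂) (Ioi 0) :=
  fun _ hr => (hasStrictDerivAt_powerProfile hr).hasDerivAt.continuousAt.continuousWithinAt

theorem powerProfile_pos_iff (hC₁ : 0 < C₁) (hr : 0 < r) :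
    0 < powerProfile α C₁ C₂ r ↔ -C₂ / C₁ < r := by
  rw [powerProfile_eq_mul hr, mul_pos_iff_of_pos_left (Real.rpow_pos_of_pos hr _),
    div_lt_iff₀ hC₁]
  constructor <;> intro h <;> linarith

theorem powerProfile_neg_div (hC₁ : 0 < C₁) (hC₂ : C₂ < 0) :
    powerProfile α C₁ C₂ (-C₂ / C₁) = 0 := by
  rw [powerProfile_eq_mul (div_pos (neg_pos.2 hC₂) hC₁), mul_div_cancel₀ _ hC₁.ne']
  ring

theorem tendsto_powerProfile_atTop (hα : 0 < α) :
    Tendsto (powerProfile α C₁ C₂) atTop (𝓝 0) := by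
  have h := ((tendsto_rpow_neg_atTop hα).const_mul C₁).add
    ((tendsto_rpow_neg_atTop (by linarith : 0 < α + 1)).const_mul C₂)
  simp only [mul_zero, add_zero, neg_add'] at h
  exact h

theorem neg_div_lt_add_one_mul_neg_div (hα : 0 < α) (hC₁ : 0 < C₁) (hC₂ : C₂ < 0) :
    -C₂ / C₁ < (α + 1) * -C₂ / (α * C₁) := by
  rw [div_lt_div_iff₀ hC₁ (mul_pos hα hC₁)]
  nlinarith [mul_pos (neg_pos.2 hC₂) hC₁]

theorem strictMonoOn_powerProfile (hα : 0 < α) (hC₁ : 0 < C₁) :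
    StrictMonoOn (powerProfile α C₁ C₂) (Ioc 0 ((α + 1) * -C₂ / (α * C₁))) := by
  refine strictMonoOn_of_hasDerivWithinAt_pos (convex_Ioc _ _)
    (continuousOn_powerProfile.mono Ioc_subset_Ioi_self)
    (fun x hx => (hasStrictDerivAt_powerProfile (interior_subset hx).1).hasDerivAt.hasDerivWithinAt)
    fun x hx => ?_
  rw [interior_Ioc] at hx
  have hlt := (lt_div_iff₀ (mul_pos hα hC₁)).1 hx.2
  exact mul_pos (Real.rpow_pos_of_pos hx.1 _) (by linarith)

theorem strictAntiOn_powerProfile (hα : 0 < α) (hC₁ : 0 < C₁) (hC₂ : C₂ < 0) :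
    StrictAntiOn (powerProfile α C₁ C₂) (Ici ((α + 1) * -C₂ / (α * C₁))) := by
  have hc : 0 < (α + 1) * -C₂ / (α * C₁) :=
    (div_pos (neg_pos.2 hC₂) hC₁).trans (neg_div_lt_add_one_mul_neg_div hα hC₁ hC₂)
  refine strictAntiOn_of_hasDerivWithinAt_neg (convex_Ici _)
    (continuousOn_powerProfile.mono fun x hx => hc.trans_le hx)
    (fun x hx => (hasStrictDerivAt_powerProfile
      (hc.trans_le (interior_subset hx))).hasDerivAt.hasDerivWithinAt)
    fun x hx => ?_
  rw [interior_Ici] at hx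
  have hlt := (div_lt_iff₀ (mul_pos hα hC₁)).1 hx
  exact mul_neg_of_pos_of_neg (Real.rpow_pos_of_pos (hc.trans hx) _) (by linarith)

theorem exists_localInverse_powerProfile (hα : 0 < α) (hC₁ : 0 < C₁) (hC₂ : C₂ < 0) :
    ∃ g : ℝ → ℝ, g 0 = -C₂ / C₁ ∧ HasDerivAt g (1 / C₁ * (-C₂ / C₁) ^ (α + 1)) 0 ∧
      ∀ᶠ y in 𝓝 0, g y ∈ Ioo 0 ((α + 1) * -C₂ / (α * C₁)) ∧ powerProfile α C₁ C₂ (g y) = y := by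
  set r₀ := -C₂ / C₁ with hr₀_def
  have hr₀ : 0 < r₀ := div_pos (neg_pos.2 hC₂) hC₁
  have hD : r₀ ^ (-α - 2) * (-(α * C₁) * r₀ - (α + 1) * C₂) = (1 / C₁ * r₀ ^ (α + 1))⁻¹ := by
    rw [show -α - 2 = -(α + 1) - 1 by ring, Real.rpow_sub_one hr₀.ne', Real.rpow_neg hr₀.le,
      hr₀_def]
    have := hC₂.ne
    field_simp
    ring
  have hf := hasStrictDerivAt_powerProfile (α := α) (C₁ := C₁) (C₂ := C₂) hr₀
  rw [hD] at hf
  have hne : (1 / C₁ * r₀ ^ (α + 1))⁻¹ ≠ 0 := by positivity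
  have hf₀ : powerProfile α C₁ C₂ r₀ = 0 := powerProfile_neg_div hC₁ hC₂
  set g := hf.localInverse _ _ _ hne
  have hg₀ : g 0 = r₀ := by
    have := (hf.eventually_left_inverse hne).self_of_nhds
    rwa [hf₀] at this
  have hg' : HasDerivAt g (1 / C₁ * r₀ ^ (α + 1)) 0 := by
    have := (hf.to_localInverse hne).hasDerivAt
    rwa [hf₀, inv_inv] at this
  have hmem : Ioo 0 ((α + 1) * -C₂ / (α * C₁)) ∈ 𝓝 (g 0) :=
    hg₀ ▸ Ioo_mem_nhds hr₀ (neg_div_lt_add_one_mul_neg_div hα hC₁ hC₂)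
  refine ⟨g, hg₀, hg', ?_⟩
  filter_upwards [hg'.continuousAt hmem, hf₀ ▸ hf.eventually_right_inverse hne] with y hy hgy
  exact ⟨hy, hgy⟩

theorem exists_gt_powerProfile_eq (hα : 0 < α) (hC₁ : 0 < C₁) (hC₂ : C₂ < 0) {μ : ℝ}
    (hμ : 0 < μ) (hμc : μ < powerProfile α C₁ C₂ ((α + 1) * -C₂ / (α * C₁))) :
    ∃ z, (α + 1) * -C₂ / (α * C₁) < z ∧ powerProfile α C₁ C₂ z = μ := by
  have hc : 0 < (α + 1) * -C₂ / (α * C₁) :=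
    (div_pos (neg_pos.2 hC₂) hC₁).trans (neg_div_lt_add_one_mul_neg_div hα hC₁ hC₂)
  exact exists_gt_apply_eq_of_tendsto_zero
    (continuousOn_powerProfile.mono fun _ hx => hc.trans_le hx) (tendsto_powerProfile_atTop hα)
    hμ hμc

theorem rpow_powerProfile (hα : α ≠ 0) (hC₁ : 0 < C₁) (hr : -C₂ / C₁ < r) (hr₀ : 0 < r) :
    C₁ ^ (1 / α) * powerProfile α C₁ C₂ r ^ (-1 / α) = r * (1 + C₂ / C₁ / r) ^ (-1 / α) := by
  have hw : 0 < 1 + C₂ / C₁ / r := by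
    rw [div_lt_iff₀ hC₁] at hr
    rw [div_div, ← sub_neg_eq_add, sub_pos, neg_div', div_lt_one (mul_pos hC₁ hr₀)]
    linarith
  have hprof : powerProfile α C₁ C₂ r = C₁ * (r ^ (-α) * (1 + C₂ / C₁ / r)) := by
    rw [powerProfile, Real.rpow_sub_one hr₀.ne']
    field_simp
  rw [hprof, Real.mul_rpow hC₁.le (by positivity), Real.mul_rpow (by positivity) hw.le,
    ← Real.rpow_mul hr₀.le, ← mul_assoc, ← Real.rpow_add hC₁,
    show 1 / α + -1 / α = 0 by ring, show -α * (-1 / α) = 1 by field_simp]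
  simp

theorem tendsto_sub_rpow_of_powerProfile_eq (hα : 0 < α) (hC₁ : 0 < C₁) (hC₂ : C₂ < 0)
    {z : ℝ → ℝ} (hz : ∀ᶠ μ in 𝓝[>] 0,
      (α + 1) * -C₂ / (α * C₁) < z μ ∧ powerProfile α C₁ C₂ (z μ) = μ) :
    Tendsto (fun μ => z μ - C₁ ^ (1 / α) * μ ^ (-1 / α) - C₂ / (α * C₁)) (𝓝[>] 0) (𝓝 0) := by
  have hr₀c := neg_div_lt_add_one_mul_neg_div hα hC₁ hC₂
  have hr₀ : 0 < -C₂ / C₁ := div_pos (neg_pos.2 hC₂) hC₁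
  have hz_top : Tendsto z (𝓝[>] 0) atTop :=
    tendsto_atTop_of_antitoneOn_of_apply_eq (strictAntiOn_powerProfile hα hC₁ hC₂).antitoneOn
      (fun r hr => (powerProfile_pos_iff hC₁ (hr₀.trans (hr₀c.trans_le hr))).2 (hr₀c.trans_le hr))
      (hz.mono fun μ hμ => ⟨hμ.1.le, hμ.2⟩)
  have hlim := (((tendsto_mul_one_add_div_rpow_sub_one (-1 / α) (C₂ / C₁)).comp
    hz_top).neg).sub_const (C₂ / (α * C₁))
  rw [show -(-1 / α * (C₂ / C₁)) - C₂ / (α * C₁) = 0 by ring] at hlim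
  refine hlim.congr' ?_
  filter_upwards [hz] with μ ⟨hcz, hμ⟩
  have key := rpow_powerProfile hα.ne' hC₁ (hr₀c.trans hcz) (hr₀.trans (hr₀c.trans hcz))
  rw [hμ] at key
  simp only [Function.comp_apply, key]
  ring

end PowerProfile

theorem roots_asymptotics_neg_C2_general
    (α : ℝ) (hα : 0 < α)
    (C₁ C₂ : ℝ) (hC₁ : 0 < C₁) (hC₂ : C₂ < 0)
    (h : ℝ → ℝ) (hh : ∀ r : ℝ, 0 < r → h r = C₁ * r ^ (-α) + C₂ * r ^ (-α - 1)) :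
    ∃ μ₀ : ℝ, 0 < μ₀ ∧ ∃ rm r₁ r₂ : ℝ → ℝ,
      (∀ μ : ℝ, 0 < μ → μ < μ₀ →
        (0 < rm μ ∧ h (rm μ) = -μ ∧ (∀ r : ℝ, 0 < r → h r = -μ → r = rm μ)) ∧
        (0 < r₁ μ ∧ r₁ μ < r₂ μ ∧ h (r₁ μ) = μ ∧ h (r₂ μ) = μ ∧
          (∀ r : ℝ, 0 < r → h r = μ → r = r₁ μ ∨ r = r₂ μ)) ∧
        {r ∈ Set.Ioi (0 : ℝ) | h r ≤ -μ} = Set.Ioc 0 (rm μ) ∧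
        {r ∈ Set.Ioi (0 : ℝ) | μ ≤ h r} = Set.Icc (r₁ μ) (r₂ μ)) ∧
      (fun μ : ℝ => rm μ - (-C₂ / C₁ - 1 / C₁ * (-C₂ / C₁) ^ (α + 1) * μ))
          =o[𝓝[>] (0 : ℝ)] (fun μ => μ) ∧
      (fun μ : ℝ => r₁ μ - (-C₂ / C₁ + 1 / C₁ * (-C₂ / C₁) ^ (α + 1) * μ))
          =o[𝓝[>] (0 : ℝ)] (fun μ => μ) ∧
      Tendsto (fun μ : ℝ => r₂ μ - C₁ ^ (1 / α) * μ ^ (-1 / α) - C₂ / (α * C₁))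
        (𝓝[>] (0 : ℝ)) (𝓝 0) := by
  have hH : EqOn h (powerProfile α C₁ C₂) (Ioi 0) := hh
  set c := (α + 1) * -C₂ / (α * C₁)
  have hr₀c : -C₂ / C₁ < c := neg_div_lt_add_one_mul_neg_div hα hC₁ hC₂
  have hr₀ : 0 < -C₂ / C₁ := div_pos (neg_pos.2 hC₂) hC₁
  have hIci : Ici c ⊆ Ioi 0 := fun r hr => hr₀.trans (hr₀c.trans_le hr)
  have hpos : ∀ r, -C₂ / C₁ < r → 0 < h r := fun r hr =>
    hH (hr₀.trans hr) ▸ (powerProfile_pos_iff hC₁ (hr₀.trans hr)).2 hr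
  obtain ⟨g, hg₀, hg', hg⟩ := exists_localInverse_powerProfile hα hC₁ hC₂
  have hg_h : ∀ᶠ y in 𝓝 0, g y ∈ Ioo 0 c ∧ h (g y) = y :=
    hg.mono fun y hy => ⟨hy.1, (hH hy.1.1).trans hy.2⟩
  choose! r₂ hr₂ using fun μ (hμ : μ ∈ Ioo 0 (h c)) =>
    exists_gt_powerProfile_eq hα hC₁ hC₂ hμ.1 (hH (hIci self_mem_Ici) ▸ hμ.2)
  have hev : ∀ᶠ μ in 𝓝[>] 0, ((g (-μ) ∈ Ioo 0 c ∧ h (g (-μ)) = -μ) ∧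
      (g μ ∈ Ioo 0 c ∧ h (g μ) = μ)) ∧ μ ∈ Ioo 0 (h c) :=
    ((((continuous_neg.tendsto' (0 : ℝ) 0 neg_zero).eventually hg_h).and hg_h).filter_mono
      nhdsWithin_le_nhds).and (Ioo_mem_nhdsGT (hpos c hr₀c))
  obtain ⟨μ₀, hμ₀, hsub⟩ := mem_nhdsGT_iff_exists_Ioo_subset.1 hev
  refine ⟨μ₀, hμ₀, fun μ => g (-μ), g, r₂, fun μ hμ hμμ₀ => ?_, ?_, ?_, ?_⟩
  · obtain ⟨⟨⟨hx, hhx⟩, ⟨hy, hhy⟩⟩, hμc⟩ := hsub ⟨hμ, hμμ₀⟩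
    obtain ⟨hz, hhz⟩ := hr₂ μ hμc
    exact level_sets_of_unimodal
      ((strictMonoOn_powerProfile hα hC₁).congr (hH.symm.mono Ioc_subset_Ioi_self))
      ((strictAntiOn_powerProfile hα hC₁ hC₂).congr (hH.symm.mono hIci)) hr₀c.le hpos hμ hx.1
      hhx hy hhy hz ((hH (hIci hz.le)).trans hhz)
  · refine (hg'.comp_of_eq 0 (hasDerivAt_neg 0) neg_zero.symm).isLittleO_nhdsGT_zero.congr_left
      fun μ => ?_
    simp only [Function.comp_apply, neg_zero, hg₀]
    ring
  · exact hg'.isLittleO_nhdsGT_zero.congr_left fun μ => by rw [hg₀]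
  · exact tendsto_sub_rpow_of_powerProfile_eq hα hC₁ hC₂ <| by
      filter_upwards [Ioo_mem_nhdsGT (hpos c hr₀c)] with μ hμ using hr₂ μ hμ

theorem roots_asymptotics_neg_C2
    {d : ℕ} (hd : 2 ≤ d) (α : ℝ) (hα : 0 < α)
    (C₁ C₂ : ℝ) (hC₁ : 0 < C₁) (hC₂ : C₂ < 0)
    (h : ℝ → ℝ) (hh : ∀ r : ℝ, 0 < r → h r = C₁ * r ^ (-α) + C₂ * r ^ (-α - 1)) :
    ∃ μ₀ : ℝ, 0 < μ₀ ∧ ∃ rm r₁ r₂ : ℝ → ℝ,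
      (∀ μ : ℝ, 0 < μ → μ < μ₀ →
        (0 < rm μ ∧ h (rm μ) = -μ ∧ (∀ r : ℝ, 0 < r → h r = -μ → r = rm μ)) ∧
        (0 < r₁ μ ∧ r₁ μ < r₂ μ ∧ h (r₁ μ) = μ ∧ h (r₂ μ) = μ ∧
          (∀ r : ℝ, 0 < r → h r = μ → r = r₁ μ ∨ r = r₂ μ)) ∧
        {r ∈ Set.Ioi (0 : ℝ) | h r ≤ -μ} = Set.Ioc 0 (rm μ) ∧
        {r ∈ Set.Ioi (0 : ℝ) | μ ≤ h r} = Set.Icc (r₁ μ) (r₂ μ)) ∧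
      (fun μ : ℝ => rm μ - (-C₂ / C₁ - 1 / C₁ * (-C₂ / C₁) ^ (α + 1) * μ))
          =o[𝓝[>] (0 : ℝ)] (fun μ => μ) ∧
      (fun μ : ℝ => r₁ μ - (-C₂ / C₁ + 1 / C₁ * (-C₂ / C₁) ^ (α + 1) * μ))
          =o[𝓝[>] (0 : ℝ)] (fun μ => μ) ∧
      Tendsto (fun μ : ℝ => r₂ μ - C₁ ^ (1 / α) * μ ^ (-1 / α) - C₂ / (α * C₁))
        (𝓝[>] (0 : ℝ)) (𝓝 0) :=
  roots_asymptotics_neg_C2_general α hα C₁ C₂ hC₁ hC₂ h hh
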